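/- arXiv:2309.04432 — 3 statements merged into one kernel-verified Lean document; each statement's English description precedes it below -/
import Mathlib

section
/- Let φ : ℝ → ℂ be differentiable everywhere, with φ ∈ L²(ℝ, ℂ) and deriv φ ∈ L²(ℝ, ℂ). Then φ(x) → 0 as x → +∞ and as x → −∞. -/
/-!
`‖φ‖²` is integrable, and so is its derivative `2 ⟪φ, φ'⟫` by Cauchy–Schwarz and Hölder;
a function with integrable derivative has limits at `±∞`, and integrability forces them to be `0`.
-/

open MeasureTheory Filter Topology

theorem MeasureTheory.MemLp.integrable_inner {α E 𝕜 : Type*} [RCLike 𝕜] [NormedAddCommGroup E]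
    [InnerProductSpace 𝕜 E] {m : MeasurableSpace α} {μ : Measure α} {p q : ENNReal}
    [ENNReal.HolderTriple p q 1] {f g : α → E} (hf : MemLp f p μ) (hg : MemLp g q μ) :
    Integrable (fun x => inner 𝕜 (f x) (g x)) μ :=
  memLp_one_iff_integrable.1 <| hf.of_bilin (fun x y => inner 𝕜 x y) 1 hg (hf.1.inner hg.1)
    (.of_forall fun _ => by simpa using nnnorm_inner_le_nnnorm _ _)

theorem tendsto_zero_of_tendsto_norm_sq_zero {α E : Type*} [SeminormedAddCommGroup E]
    {l : Filter α} {f : α → E} (h : Tendsto (fun x => ‖f x‖ ^ 2) l (𝓝 0)) :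
    Tendsto f l (𝓝 0) := by
  rw [tendsto_zero_iff_norm_tendsto_zero]
  simpa [Real.sqrt_sq (norm_nonneg _)] using h.sqrt

theorem tendsto_zero_of_memLp_two_of_deriv_memLp_two {E : Type*} [NormedAddCommGroup E]
    [InnerProductSpace ℝ E] {φ : ℝ → E} (hdiff : Differentiable ℝ φ)
    (hφ : MemLp φ 2 volume) (hφ' : MemLp (deriv φ) 2 volume) :
    Tendsto φ atTop (𝓝 0) ∧ Tendsto φ atBot (𝓝 0) := by
  have hderiv (x : ℝ) : HasDerivAt (‖φ ·‖ ^ 2) (2 * inner ℝ (φ x) (deriv φ x)) x :=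
    (hdiff x).hasDerivAt.norm_sq
  have hint : Integrable (‖φ ·‖ ^ 2) volume := hφ.integrable_norm_pow two_ne_zero
  have hint' : Integrable (fun x => 2 * inner ℝ (φ x) (deriv φ x)) volume :=
    (hφ.integrable_inner hφ').const_mul 2
  exact ⟨tendsto_zero_of_tendsto_norm_sq_zero <| tendsto_zero_of_hasDerivAt_of_integrableOn_Ioi
      (a := 0) (fun x _ => hderiv x) hint'.integrableOn hint.integrableOn,
    tendsto_zero_of_tendsto_norm_sq_zero <| tendsto_zero_of_hasDerivAt_of_integrableOn_Iic
      (a := 0) (fun x _ => hderiv x) hint'.integrableOn hint.integrableOn⟩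

/-- If `φ : ℝ → ℂ` is everywhere differentiable with
`φ ∈ L²(ℝ, ℂ)` and `φ' ∈ L²(ℝ, ℂ)`, then `φ(x) → 0` as `x → ±∞`. -/
theorem tendsto_zero_of_L2_deriv_L2 (φ : ℝ → ℂ) (hdiff : Differentiable ℝ φ)
    (hφ : MemLp φ 2 (volume : Measure ℝ))
    (hφ' : MemLp (deriv φ) 2 (volume : Measure ℝ)) :
    Tendsto φ atTop (nhds 0) ∧ Tendsto φ atBot (nhds 0) :=
  tendsto_zero_of_memLp_two_of_deriv_memLp_two hdiff hφ hφ'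
end

section
/- Let ν > 0 and Λ₀ > 0 be real numbers, and let λ ∈ ℂ satisfy Im(λ² + νλ) = 0 and Re(λ² + νλ) ≤ −Λ₀. Then Re λ ≤ −ν/2 + (1/2)·(if ν ≥ 2√Λ₀ then √(ν² − 4Λ₀) else 0); in particular Re λ < 0. -/
/-- If `ν > 0`, `Λ₀ > 0` and `λ ∈ ℂ` satisfies
`Im(λ² + νλ) = 0` and `Re(λ² + νλ) ≤ −Λ₀`, then
`Re λ ≤ −ν/2 + (1/2)·(if ν ≥ 2√Λ₀ then √(ν² − 4Λ₀) else 0)`;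
in particular `Re λ < 0`. -/
theorem spectral_bound_re_neg (ν Λ₀ : ℝ) (hν : 0 < ν) (hΛ : 0 < Λ₀) (l : ℂ)
    (him : (l ^ 2 + (ν : ℂ) * l).im = 0)
    (hre : (l ^ 2 + (ν : ℂ) * l).re ≤ -Λ₀) :
    l.re ≤ -ν / 2 + (1 / 2) *
      (if 2 * Real.sqrt Λ₀ ≤ ν then Real.sqrt (ν ^ 2 - 4 * Λ₀) else 0) ∧
    l.re < 0 := by
  set x := l.re with hx
  set y := l.im with hy
  have him' : y * (2 * x + ν) = 0 := by
    simp [Complex.add_im, Complex.mul_im, pow_two, Complex.mul_re] at him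
    ring_nf at him ⊢
    linarith
  have hre' : x ^ 2 - y ^ 2 + ν * x ≤ -Λ₀ := by
    simp [Complex.add_re, Complex.mul_re, pow_two] at hre
    nlinarith [hre]
  rcases mul_eq_zero.mp him' with hy0 | hx0
  · -- y = 0
    have hdisc : (2 * x + ν) ^ 2 ≤ ν ^ 2 - 4 * Λ₀ := by nlinarith
    have h4 : 4 * Λ₀ ≤ ν ^ 2 := by nlinarith [sq_nonneg (2 * x + ν)]
    have h1 : 2 * Real.sqrt Λ₀ ≤ ν := by
      nlinarith [Real.sq_sqrt hΛ.le, Real.sqrt_nonneg Λ₀]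
    rw [if_pos h1]
    have h2 : 2 * x + ν ≤ Real.sqrt (ν ^ 2 - 4 * Λ₀) := by
      calc 2 * x + ν ≤ |2 * x + ν| := le_abs_self _
        _ = Real.sqrt ((2 * x + ν) ^ 2) := (Real.sqrt_sq_eq_abs _).symm
        _ ≤ Real.sqrt (ν ^ 2 - 4 * Λ₀) := Real.sqrt_le_sqrt hdisc
    have h3 : Real.sqrt (ν ^ 2 - 4 * Λ₀) < ν := by
      have : Real.sqrt (ν ^ 2 - 4 * Λ₀) < Real.sqrt (ν ^ 2) :=
        Real.sqrt_lt_sqrt (by nlinarith) (by nlinarith)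
      rwa [Real.sqrt_sq hν.le] at this
    constructor <;> linarith
  · -- 2x + ν = 0
    have hxe : x = -ν / 2 := by linarith
    constructor
    · rw [hxe]
      have : (0:ℝ) ≤ (if 2 * Real.sqrt Λ₀ ≤ ν then Real.sqrt (ν ^ 2 - 4 * Λ₀) else 0) := by
        split_ifs <;> positivity
      linarith
    · rw [hxe]; linarith
end

section
/- Let ν > 0, C₀ > 0, C₁ > 0 be real numbers and set K := 2·max{√(ν² + 4C₁²)/(ν·C₁), 1/C₀}. Then for every λ ∈ ℂ with Re λ ≥ 0 such that Re λ > C₀ or |Im λ| > C₁, and all real numbers a ≥ 0 and b ≥ 0, one has (√a + √b)² ≤ K·|conj(λ)·a + (λ + ν)·b|, where conj(λ) is the complex conjugate of λ and |·| the complex modulus. -/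
/-!
With `z = conj λ · a + (λ + ν) · b` one has `Re z = Re λ · (a + b) + ν b` and
`Im z = Im λ · (b - a)`. If `Re λ > C₀`, then already `Re z ≥ C₀ (a + b)`. If `|Im λ| > C₁`,
write `a + b ≤ 2b + |a - b| ≤ (2/ν) |Re z| + (1/C₁) |Im z|` and apply Cauchy–Schwarz in `ℝ²`;
the constant `√((2/ν)² + (1/C₁)²)` is exactly `√(ν² + 4C₁²)/(ν C₁)`.
Finally `(√a + √b)² ≤ 2 (a + b)`.
-/

open Complex

section ResolventForm

variable (l : ℂ) (ν a b : ℝ)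

lemma re_conj_mul_add_add_mul :
    ((starRingEnd ℂ) l * a + (l + ν) * b).re = l.re * (a + b) + ν * b := by
  simp only [add_re, mul_re, conj_re, conj_im, ofReal_re, ofReal_im]
  ring

lemma im_conj_mul_add_add_mul :
    ((starRingEnd ℂ) l * a + (l + ν) * b).im = l.im * (b - a) := by
  simp only [add_im, mul_im, conj_re, conj_im, ofReal_re, ofReal_im, add_zero]
  ring

end ResolventForm

lemma sqrt_add_sqrt_sq_le {a b : ℝ} (ha : 0 ≤ a) (hb : 0 ≤ b) :
    (√a + √b) ^ 2 ≤ 2 * (a + b) := by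
  simpa only [Real.sq_sqrt ha, Real.sq_sqrt hb] using add_sq_le (a := √a) (b := √b)

lemma mul_add_mul_le_sqrt_mul_sqrt (p q u w : ℝ) :
    p * u + q * w ≤ √(p ^ 2 + q ^ 2) * √(u ^ 2 + w ^ 2) := by
  rw [← Real.sqrt_mul (by positivity)]
  exact Real.le_sqrt_of_sq_le (by nlinarith [sq_nonneg (p * w - q * u)])

lemma add_le_inv_mul_norm {C₀ a b : ℝ} (hC₀ : 0 < C₀) {z : ℂ}
    (hz : C₀ * (a + b) ≤ z.re) : a + b ≤ 1 / C₀ * ‖z‖ := by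
  rw [one_div_mul_eq_div, le_div_iff₀ hC₀, mul_comm]
  exact hz.trans (re_le_norm z)

lemma sqrt_div_mul_eq_sqrt {ν C₁ : ℝ} (hν : 0 < ν) (hC₁ : 0 < C₁) :
    √(ν ^ 2 + 4 * C₁ ^ 2) / (ν * C₁) = √((2 / ν) ^ 2 + (1 / C₁) ^ 2) := by
  have hsq : (2 / ν) ^ 2 + (1 / C₁) ^ 2 = (ν ^ 2 + 4 * C₁ ^ 2) / (ν * C₁) ^ 2 := by
    field_simp
    ring
  rw [hsq, Real.sqrt_div' _ (by positivity), Real.sqrt_sq (by positivity)]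

lemma add_le_sqrt_div_mul_norm {ν C₁ a b : ℝ} (hν : 0 < ν) (hC₁ : 0 < C₁) {z : ℂ}
    (hre : ν * b ≤ z.re) (him : C₁ * |b - a| ≤ |z.im|) :
    a + b ≤ √(ν ^ 2 + 4 * C₁ ^ 2) / (ν * C₁) * ‖z‖ := by
  have hb : 2 * b ≤ 2 / ν * |z.re| := by
    rw [div_mul_eq_mul_div, le_div_iff₀ hν]
    linarith [le_abs_self z.re]
  have hab : |b - a| ≤ 1 / C₁ * |z.im| := by
    rwa [one_div_mul_eq_div, le_div_iff₀ hC₁, mul_comm]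
  calc a + b ≤ 2 * b + |b - a| := by linarith [neg_abs_le (b - a)]
    _ ≤ 2 / ν * |z.re| + 1 / C₁ * |z.im| := add_le_add hb hab
    _ ≤ √((2 / ν) ^ 2 + (1 / C₁) ^ 2) * √(|z.re| ^ 2 + |z.im| ^ 2) :=
      mul_add_mul_le_sqrt_mul_sqrt _ _ _ _
    _ = √(ν ^ 2 + 4 * C₁ ^ 2) / (ν * C₁) * ‖z‖ := by
      rw [sq_abs, sq_abs, ← norm_eq_sqrt_sq_add_sq, sqrt_div_mul_eq_sqrt hν hC₁]

/-- Let `ν, C₀, C₁ > 0` and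
`K := 2·max{√(ν² + 4C₁²)/(ν·C₁), 1/C₀}`.  Then for every `λ ∈ ℂ` with
`Re λ ≥ 0` and (`Re λ > C₀` or `|Im λ| > C₁`), and all reals `a, b ≥ 0`,
`(√a + √b)² ≤ K·|conj(λ)·a + (λ + ν)·b|`. -/
theorem resolvent_core_inequality (ν C₀ C₁ : ℝ)
    (hν : 0 < ν) (hC₀ : 0 < C₀) (hC₁ : 0 < C₁) :
    ∀ l : ℂ, 0 ≤ l.re → (C₀ < l.re ∨ C₁ < |l.im|) →
      ∀ a b : ℝ, 0 ≤ a → 0 ≤ b →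
        (Real.sqrt a + Real.sqrt b) ^ 2 ≤
          (2 * max (Real.sqrt (ν ^ 2 + 4 * C₁ ^ 2) / (ν * C₁)) (1 / C₀)) *
            ‖(starRingEnd ℂ) l * (a : ℂ) + (l + (ν : ℂ)) * (b : ℂ)‖ := by
  intro l hre hcase a b ha hb
  set z := (starRingEnd ℂ) l * (a : ℂ) + (l + (ν : ℂ)) * (b : ℂ)
  have hz_re : z.re = l.re * (a + b) + ν * b := re_conj_mul_add_add_mul l ν a b
  have hz_im : z.im = l.im * (b - a) := im_conj_mul_add_add_mul l ν a b
  have hsum : a + b ≤ max (√(ν ^ 2 + 4 * C₁ ^ 2) / (ν * C₁)) (1 / C₀) * ‖z‖ := by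
    rcases hcase with hC₀_lt | hC₁_lt
    · refine (add_le_inv_mul_norm hC₀ ?_).trans
        (mul_le_mul_of_nonneg_right (le_max_right _ _) (norm_nonneg z))
      rw [hz_re]
      linarith [mul_le_mul_of_nonneg_right hC₀_lt.le (add_nonneg ha hb), mul_nonneg hν.le hb]
    · refine (add_le_sqrt_div_mul_norm hν hC₁ ?_ ?_).trans
        (mul_le_mul_of_nonneg_right (le_max_left _ _) (norm_nonneg z))
      · rw [hz_re]
        linarith [mul_nonneg hre (add_nonneg ha hb)]
      · rw [hz_im, abs_mul]
        exact mul_le_mul_of_nonneg_right hC₁_lt.le (abs_nonneg _)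
  calc (√a + √b) ^ 2 ≤ 2 * (a + b) := sqrt_add_sqrt_sq_le ha hb
    _ ≤ 2 * (max (√(ν ^ 2 + 4 * C₁ ^ 2) / (ν * C₁)) (1 / C₀) * ‖z‖) := by gcongr
    _ = _ := (mul_assoc _ _ _).symm
end
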